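/- (MM descent property of the surrogate.) Let I be a finite index set, q : I → {-1, 1}, and x, x₀ : I → ℝ. Define z₀(i) = x₀(i) + 4·q(i)·(1 - π(q(i)·x₀(i))), where π(u) = exp(u)/(exp(u)+1). If ∑_{i ∈ I} (x(i) - z₀(i))² ≤ ∑_{i ∈ I} (x₀(i) - z₀(i))², then ∑_{i ∈ I} -log(π(q(i)·x(i))) ≤ ∑_{i ∈ I} -log(π(q(i)·x₀(i))). That is, any update that decreases the surrogate least-squares criterion decreases the negative Bernoulli log-likelihood. -/

import Mathlib

/-- The logistic function π(u) = exp(u)/(exp(u)+1). -/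
noncomputable def logistic (x : ℝ) : ℝ := Real.exp x / (Real.exp x + 1)

/-!
The loss `ℓ(t) = -log π(t)` has `ℓ' = π - 1` and `ℓ'' = π (1 - π) ≤ 1/4`, so it lies below its
quadratic majorizer `ℓ(a) + ℓ'(a) (b - a) + (b - a)² / 8` at every base point `a`. For `q = ±1`
and `a = q x₀`, `b = q x`, that majorizer is, up to the constant `ℓ(q x₀)`, one eighth of
`(x - z₀)² - (x₀ - z₀)²`; summing over `I`, a decrease of the surrogate bounds the likelihood
from above by its value at `x₀`.
-/

open Real

theorem ConvexOn.add_mul_sub_le_of_hasDerivAt {S : Set ℝ} {f : ℝ → ℝ} {f' a b : ℝ}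
    (hf : ConvexOn ℝ S f) (ha : a ∈ S) (hb : b ∈ S) (hd : HasDerivAt f f' a) :
    f a + f' * (b - a) ≤ f b := by
  rcases lt_trichotomy a b with hab | rfl | hba
  · have h := hf.le_slope_of_hasDerivAt ha hb hab hd
    rw [slope_def_field, le_div_iff₀ (sub_pos.2 hab)] at h
    linarith
  · simp
  · have h := hf.slope_le_of_hasDerivAt hb ha hba hd
    rw [slope_def_field, div_le_iff₀ (sub_pos.2 hba)] at h
    linarith

theorem le_add_mul_sub_add_sq_of_monotone {f f' : ℝ → ℝ} {K : ℝ}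
    (hf : ∀ x, HasDerivAt f (f' x) x) (hmono : Monotone fun x ↦ K * x - f' x) (a b : ℝ) :
    f b ≤ f a + f' a * (b - a) + K / 2 * (b - a) ^ 2 := by
  have hg : ∀ x, HasDerivAt (fun x ↦ K / 2 * x ^ 2 - f x) (K * x - f' x) x := fun x ↦
    (((hasDerivAt_pow 2 x).const_mul (K / 2)).sub (hf x)).congr_deriv (by push_cast; ring)
  -- `K x² / 2 - f` has monotone derivative, so it lies above its tangent line at `a`.
  have hconvex : ConvexOn ℝ Set.univ fun x ↦ K / 2 * x ^ 2 - f x :=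
    Monotone.convexOn_univ_of_deriv (fun x ↦ (hg x).differentiableAt)
      (by rwa [funext fun x ↦ (hg x).deriv])
  linarith [hconvex.add_mul_sub_le_of_hasDerivAt (Set.mem_univ a) (Set.mem_univ b) (hg a)]

theorem logistic_eq_sigmoid : logistic = sigmoid := by
  ext x
  rw [logistic, sigmoid_def, exp_neg]
  field_simp

theorem hasDerivAt_neg_log_sigmoid (x : ℝ) :
    HasDerivAt (fun t ↦ -log (sigmoid t)) (sigmoid x - 1) x := by
  refine ((hasDerivAt_sigmoid x).log (sigmoid_pos x).ne').neg.congr_deriv ?_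
  field_simp [(sigmoid_pos x).ne']
  ring

theorem neg_log_sigmoid_le (a b : ℝ) :
    -log (sigmoid b) ≤ -log (sigmoid a) + (sigmoid a - 1) * (b - a) + (b - a) ^ 2 / 8 := by
  have hmono : Monotone fun x ↦ 1 / 4 * x - (sigmoid x - 1) :=
    monotone_of_hasDerivAt_nonneg
      (fun x ↦ ((hasDerivAt_id x).const_mul (1 / 4)).sub ((hasDerivAt_sigmoid x).sub_const 1))
      fun x ↦ show 0 ≤ 1 / 4 * 1 - sigmoid x * (1 - sigmoid x) by
        nlinarith [sq_nonneg (2 * sigmoid x - 1)]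
  have h := le_add_mul_sub_add_sq_of_monotone hasDerivAt_neg_log_sigmoid hmono a b
  linarith

theorem neg_log_sigmoid_mul_le {q x x₀ : ℝ} (hq : q * q = 1) :
    -log (sigmoid (q * x)) ≤ -log (sigmoid (q * x₀)) +
      ((x - (x₀ + 4 * q * (1 - sigmoid (q * x₀)))) ^ 2 -
        (x₀ - (x₀ + 4 * q * (1 - sigmoid (q * x₀)))) ^ 2) / 8 := by
  linear_combination neg_log_sigmoid_le (q * x₀) (q * x) + (x - x₀) ^ 2 / 8 * hq

/-- MM descent property of the surrogate. With
z₀(i) = x₀(i) + 4q(i)(1 - π(q(i)x₀(i))), any update x that decreases the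
surrogate least-squares criterion ∑ᵢ (x(i) - z₀(i))² below ∑ᵢ (x₀(i) - z₀(i))²
also decreases the negative Bernoulli log-likelihood. -/
theorem mm_descent_property {I : Type*} [Fintype I]
    (q x x₀ : I → ℝ) (hq : ∀ i, q i = -1 ∨ q i = 1)
    (z₀ : I → ℝ)
    (hz₀ : ∀ i, z₀ i = x₀ i + 4 * q i * (1 - logistic (q i * x₀ i)))
    (hdec : ∑ i, (x i - z₀ i) ^ 2 ≤ ∑ i, (x₀ i - z₀ i) ^ 2) :
    ∑ i, -Real.log (logistic (q i * x i)) ≤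
      ∑ i, -Real.log (logistic (q i * x₀ i)) := by
  rw [logistic_eq_sigmoid] at hz₀ ⊢
  have hmajor : ∀ i, -log (sigmoid (q i * x i)) ≤
      -log (sigmoid (q i * x₀ i)) + ((x i - z₀ i) ^ 2 - (x₀ i - z₀ i) ^ 2) / 8 := fun i ↦ by
    rw [hz₀ i]
    exact neg_log_sigmoid_mul_le (by rcases hq i with h | h <;> norm_num [h])
  calc ∑ i, -log (sigmoid (q i * x i))
      ≤ ∑ i, (-log (sigmoid (q i * x₀ i)) + ((x i - z₀ i) ^ 2 - (x₀ i - z₀ i) ^ 2) / 8) :=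
        Finset.sum_le_sum fun i _ ↦ hmajor i
    _ = ∑ i, -log (sigmoid (q i * x₀ i)) +
          (∑ i, (x i - z₀ i) ^ 2 - ∑ i, (x₀ i - z₀ i) ^ 2) / 8 := by
        rw [Finset.sum_add_distrib, ← Finset.sum_div, Finset.sum_sub_distrib]
    _ ≤ ∑ i, -log (sigmoid (q i * x₀ i)) := by linarith
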